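/- arXiv:2507.17073 — 2 statements merged into one kernel-verified Lean document; each statement's English description precedes it below -/
import Mathlib

section
/- For every β ≥ 0 and every x ∈ (0,∞), if tanh(βx) > x then x < m(β), where m(β) is the largest solution of the Curie-Weiss equation tanh(βx) = x. -/
/-- `m β` is the largest solution of the Curie-Weiss equation `tanh (β * x) = x`. -/
noncomputable def cwM (β : ℝ) : ℝ := sSup {x : ℝ | Real.tanh (β * x) = x}

/-!
Because `tanh < 1`, the map `t ↦ tanh (β * t)` lies above the diagonal at `x` and below it at `1`,
so by the intermediate value theorem it has a fixed point in `(x, 1)`; the set of solutions is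
bounded above by `1`, so that fixed point is at most `m β`.
-/

open Real Set

lemma Real.continuous_tanh : Continuous tanh := by
  simp only [funext tanh_eq_sinh_div_cosh]
  exact continuous_sinh.div continuous_cosh fun x => (cosh_pos x).ne'

lemma exists_mem_Ioo_fixedPoint {f : ℝ → ℝ} (hf : Continuous f) {a b : ℝ} (hab : a ≤ b)
    (ha : a < f a) (hb : f b < b) : ∃ y ∈ Ioo a b, f y = y := by
  have hg : ContinuousOn (fun t => t - f t) (Icc a b) := (continuous_id.sub hf).continuousOn
  obtain ⟨y, hy, hy0⟩ := intermediate_value_Ioo hab hg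
    (show (0 : ℝ) ∈ Ioo (a - f a) (b - f b) from ⟨by linarith, by linarith⟩)
  exact ⟨y, hy, by linarith [show y - f y = 0 from hy0]⟩

lemma bddAbove_setOf_tanh_mul_eq (β : ℝ) : BddAbove {x : ℝ | tanh (β * x) = x} :=
  ⟨1, fun _ hx => hx ▸ (tanh_lt_one _).le⟩

theorem stmt_0_general (β : ℝ) (x : ℝ)
    (h : x < Real.tanh (β * x)) : x < cwM β := by
  have hx1 : x ≤ 1 := (h.trans (tanh_lt_one _)).le
  obtain ⟨y, hxy, hy⟩ := exists_mem_Ioo_fixedPoint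
    (continuous_tanh.comp (continuous_const_mul β)) hx1 h (tanh_lt_one (β * 1))
  exact hxy.1.trans_le (le_csSup (bddAbove_setOf_tanh_mul_eq β) hy)

theorem stmt_0 (β : ℝ) (hβ : 0 ≤ β) (x : ℝ) (hx : 0 < x)
    (h : x < Real.tanh (β * x)) : x < cwM β :=
  stmt_0_general β x h
end

section
/- The Legendre transform of t ↦ ln cosh t is given by Λ*(x) = ((1−x)/2)·ln(1−x) + ((1+x)/2)·ln(1+x) for x ∈ (−1,1), Λ*(±1) = ln 2, and Λ*(x) = ∞ for |x| > 1. -/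
/-!
For `|x| < 1` the supremum is attained at `t = artanh x`. The matching upper bound is Jensen's
inequality for `log`: `cosh t` is the mean of `exp t / (1 + x)` and `exp (-t) / (1 - x)` with
weights `(1 + x) / 2` and `(1 - x) / 2`. At `x = 1` the function
`t - log (cosh t) = log 2 - log (1 + exp (-2 t))` increases to `log 2` without attaining it, and
for `x > 1` the bound `log (cosh t) ≤ t` gives `x t - log (cosh t) ≥ (x - 1) t → ∞`.
The transform is even in `x`, which handles `x ≤ -1`.
-/

/-- The Legendre transform of `t ↦ ln cosh t`, valued in the extended reals. -/
noncomputable def lambdaStar (x : ℝ) : EReal :=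
  ⨆ t : ℝ, ((x * t - Real.log (Real.cosh t) : ℝ) : EReal)

open Real Set Filter Topology

namespace EReal

variable {ι : Type*} {l : Filter ι} [l.NeBot] {f : ι → ℝ}

lemma iSup_coe_eq_of_tendsto {c : ℝ} (hle : ∀ i, f i ≤ c) (hf : Tendsto f l (𝓝 c)) :
    ⨆ i, (f i : EReal) = c :=
  le_antisymm (iSup_le fun i ↦ by exact_mod_cast hle i)
    (le_of_tendsto' ((continuous_coe_real_ereal.tendsto c).comp hf)
      (le_iSup (fun i ↦ (f i : EReal))))

lemma iSup_coe_eq_top_of_tendsto_atTop (hf : Tendsto f l atTop) : ⨆ i, (f i : EReal) = ⊤ :=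
  top_le_iff.1 (le_of_tendsto' (tendsto_coe_atTop.comp hf) (le_iSup (fun i ↦ (f i : EReal))))

end EReal

lemma lambdaStar_neg (x : ℝ) : lambdaStar (-x) = lambdaStar x := by
  unfold lambdaStar
  refine (Equiv.neg ℝ).iSup_congr fun t ↦ ?_
  simp [cosh_neg]

lemma mul_sub_log_cosh_le {x : ℝ} (hx : x ∈ Ioo (-1) 1) (t : ℝ) :
    x * t - log (cosh t) ≤ (1 - x) / 2 * log (1 - x) + (1 + x) / 2 * log (1 + x) := by
  obtain ⟨hx₁, hx₂⟩ := hx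
  have hp : 0 < 1 + x := by linarith
  have hm : 0 < 1 - x := by linarith
  have hjensen := strictConcaveOn_log_Ioi.concaveOn.2
    (mem_Ioi.2 (div_pos (exp_pos t) hp)) (mem_Ioi.2 (div_pos (exp_pos (-t)) hm))
    (div_pos hp two_pos).le (div_pos hm two_pos).le (by ring)
  have hcosh : (1 + x) / 2 * (exp t / (1 + x)) + (1 - x) / 2 * (exp (-t) / (1 - x)) = cosh t := by
    rw [cosh_eq]; field_simp
  simp only [smul_eq_mul, hcosh, log_div (exp_pos _).ne' hp.ne', log_div (exp_pos _).ne' hm.ne',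
    log_exp] at hjensen
  linarith

lemma artanh_mul_sub_log_cosh {x : ℝ} (hx : x ∈ Ioo (-1) 1) :
    x * artanh x - log (cosh (artanh x)) =
      (1 - x) / 2 * log (1 - x) + (1 + x) / 2 * log (1 + x) := by
  obtain ⟨hx₁, hx₂⟩ := hx
  have hp : 0 < 1 + x := by linarith
  have hm : 0 < 1 - x := by linarith
  have hsq : 1 - x ^ 2 = (1 + x) * (1 - x) := by ring
  rw [cosh_artanh ⟨hx₁, hx₂⟩, artanh_eq_half_log ⟨hx₁.le, hx₂.le⟩, log_div hp.ne' hm.ne',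
    one_div √_, log_inv, log_sqrt (by nlinarith), hsq, log_mul hp.ne' hm.ne']
  ring

lemma sub_log_cosh_eq (t : ℝ) : t - log (cosh t) = log 2 - log (1 + exp (-2 * t)) := by
  have hcosh : cosh t = exp t * (1 + exp (-2 * t)) / 2 := by
    rw [cosh_eq, mul_add, mul_one, ← exp_add]; ring_nf
  rw [hcosh, log_div (by positivity) two_ne_zero, log_mul (exp_pos t).ne' (by positivity), log_exp]
  ring

lemma sub_log_cosh_le (t : ℝ) : t - log (cosh t) ≤ log 2 := by
  rw [sub_log_cosh_eq]
  have : 0 ≤ log (1 + exp (-2 * t)) := log_nonneg (by linarith [exp_pos (-2 * t)])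
  linarith

lemma tendsto_sub_log_cosh_atTop : Tendsto (fun t ↦ t - log (cosh t)) atTop (𝓝 (log 2)) := by
  have hexp : Tendsto (fun t : ℝ ↦ exp (-2 * t)) atTop (𝓝 0) :=
    tendsto_exp_atBot.comp (tendsto_id.const_mul_atTop_of_neg (by norm_num))
  have hlog := (continuousAt_log (by norm_num : (1 : ℝ) + 0 ≠ 0)).tendsto.comp
    (tendsto_const_nhds.add hexp)
  simpa [sub_log_cosh_eq] using tendsto_const_nhds.sub hlog

lemma log_cosh_le {t : ℝ} (ht : 0 ≤ t) : log (cosh t) ≤ t := by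
  refine (log_le_iff_le_exp (cosh_pos t)).2 ?_
  rw [cosh_eq]
  linarith [exp_le_exp.2 (by linarith : -t ≤ t)]

lemma tendsto_mul_sub_log_cosh_atTop {x : ℝ} (hx : 1 < x) :
    Tendsto (fun t ↦ x * t - log (cosh t)) atTop atTop := by
  refine tendsto_atTop_mono' _ ?_ (tendsto_id.const_mul_atTop (sub_pos.2 hx))
  filter_upwards [eventually_ge_atTop 0] with t ht
  simp only [id, sub_one_mul]
  linarith [log_cosh_le ht]

lemma lambdaStar_of_mem_Ioo {x : ℝ} (hx : x ∈ Ioo (-1) 1) :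
    lambdaStar x = (((1 - x) / 2 * log (1 - x) + (1 + x) / 2 * log (1 + x) : ℝ) : EReal) := by
  refine EReal.iSup_coe_eq_of_tendsto (l := pure (artanh x)) (mul_sub_log_cosh_le hx) ?_
  rw [← artanh_mul_sub_log_cosh hx]
  exact tendsto_pure_nhds _ _

lemma lambdaStar_one : lambdaStar 1 = ((log 2 : ℝ) : EReal) := by
  simpa only [lambdaStar, one_mul] using
    EReal.iSup_coe_eq_of_tendsto sub_log_cosh_le tendsto_sub_log_cosh_atTop

lemma lambdaStar_eq_top_of_one_lt {x : ℝ} (hx : 1 < x) : lambdaStar x = ⊤ :=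
  EReal.iSup_coe_eq_top_of_tendsto_atTop (tendsto_mul_sub_log_cosh_atTop hx)

theorem stmt_11 :
    (∀ x : ℝ, x ∈ Set.Ioo (-1 : ℝ) 1 →
        lambdaStar x
          = (((1 - x) / 2 * Real.log (1 - x) + (1 + x) / 2 * Real.log (1 + x) : ℝ) : EReal)) ∧
      lambdaStar 1 = ((Real.log 2 : ℝ) : EReal) ∧
      lambdaStar (-1) = ((Real.log 2 : ℝ) : EReal) ∧
      (∀ x : ℝ, 1 < |x| → lambdaStar x = ⊤) := by
  refine ⟨fun x hx ↦ lambdaStar_of_mem_Ioo hx, lambdaStar_one, ?_, fun x hx ↦ ?_⟩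
  · rw [lambdaStar_neg, lambdaStar_one]
  · rcases lt_abs.1 hx with hx | hx
    · exact lambdaStar_eq_top_of_one_lt hx
    · rw [← lambdaStar_neg]
      exact lambdaStar_eq_top_of_one_lt hx
end
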